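/- Let C ⊆ L0+ be convexly compact (convex, closed in the topology of convergence in probability, and bounded). Then C has at least one outer support point, i.e. C^osp ≠ ∅. -/

import Mathlib

open MeasureTheory Filter Set

noncomputable section

variable {Ω : Type*} [MeasurableSpace Ω]

/-- The nonnegative orthant `L⁰₊` of the space `L⁰` of (a.e.-equivalence classes of)
random variables over `(Ω, ℱ, P)`. -/
def L0plus (P : Measure Ω) : Set (Ω →ₘ[P] ℝ) := {f | 0 ≤ f}

/-- The metric `(f, g) ↦ E[1 ∧ |f - g|]` inducing the topology of convergence
in probability on `L⁰`. -/
def dist0 (P : Measure Ω) (f g : Ω →ₘ[P] ℝ) : ℝ :=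
  ∫ ω, min 1 |f ω - g ω| ∂P

/-- Convergence in probability of a sequence in `L⁰`. -/
def Tendsto0 (P : Measure Ω) (f : ℕ → Ω →ₘ[P] ℝ) (g : Ω →ₘ[P] ℝ) : Prop :=
  Tendsto (fun n => dist0 P (f n) g) atTop (nhds 0)

/-- Closure of a set in `L⁰` with respect to the topology of convergence in probability. -/
def closure0 (P : Measure Ω) (C : Set (Ω →ₘ[P] ℝ)) : Set (Ω →ₘ[P] ℝ) :=
  {f | ∀ ε : ℝ, 0 < ε → ∃ g ∈ C, dist0 P f g < ε}

/-- A set of `L⁰` is closed iff it contains its closure. -/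
def IsClosed0 (P : Measure Ω) (C : Set (Ω →ₘ[P] ℝ)) : Prop :=
  closure0 P C ⊆ C

/-- Boundedness (in probability) of a set `C ⊆ L⁰₊` : `lim_{ℓ → ∞} sup_{f ∈ C} P[f > ℓ] = 0`. -/
def Bounded0 (P : Measure Ω) (C : Set (Ω →ₘ[P] ℝ)) : Prop :=
  Tendsto (fun ℓ : ℝ => ⨆ f ∈ C, P {ω | ℓ < f ω}) atTop (nhds 0)

/-- The set `C^max` of maximal elements of `C ⊆ L⁰₊` : `f ∈ C` such that `f ≤ g` a.s.
and `g ∈ C` imply `f = g` a.s. -/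
def maxSet (P : Measure Ω) (C : Set (Ω →ₘ[P] ℝ)) : Set (Ω →ₘ[P] ℝ) :=
  {f | f ∈ C ∧ ∀ g ∈ C, f ≤ g → f = g}

/-- `C` is max-closed if every maximal element of its closure already belongs to `C`. -/
def MaxClosed (P : Measure Ω) (C : Set (Ω →ₘ[P] ℝ)) : Prop :=
  maxSet P (closure0 P C) ⊆ C

/-- The pairing `⟨μ, f⟩ = ∫ f dμ ∈ [0, ∞]` between a nonnegative measure `μ` and `f ∈ L⁰₊`. -/
def pairing {P : Measure Ω} (μ : Measure Ω) (f : Ω →ₘ[P] ℝ) : ENNReal :=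
  ∫⁻ ω, ENNReal.ofReal (f ω) ∂μ

/-- The set `C^osp` of outer support points of `C ⊆ L⁰₊`: points `g ∈ C^max` for which there
is a σ-finite nonnegative measure `μ ≪ P` with `0 < sup_{f ∈ C} ⟨μ, f⟩ = ⟨μ, g⟩ < ∞`;
by convention `{0}^osp = {0}`. -/
def osp (P : Measure Ω) (C : Set (Ω →ₘ[P] ℝ)) : Set (Ω →ₘ[P] ℝ) :=
  {g | g ∈ maxSet P C ∧
    (C = {0} ∨ ∃ μ : Measure Ω, μ ≪ P ∧ SigmaFinite μ ∧
      0 < pairing μ g ∧ pairing μ g < ⊤ ∧ (⨆ f ∈ C, pairing μ f) = pairing μ g)}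

/-- The solid hull of `C ⊆ L⁰₊`. -/
def solidHull (P : Measure Ω) (C : Set (Ω →ₘ[P] ℝ)) : Set (Ω →ₘ[P] ℝ) :=
  {f | f ∈ L0plus P ∧ ∃ g ∈ C, f ≤ g}

/-- A set `S ⊆ L⁰₊` is solid if `g ∈ S` and `0 ≤ f ≤ g` imply `f ∈ S`. -/
def Solid (P : Measure Ω) (S : Set (Ω →ₘ[P] ℝ)) : Prop :=
  ∀ g ∈ S, ∀ f : Ω →ₘ[P] ℝ, 0 ≤ f → f ≤ g → f ∈ S

/-- `(g n)` is a sequence of forward convex combinations of `(f n)`. -/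
def ForwardConvexComb (P : Measure Ω) (f g : ℕ → Ω →ₘ[P] ℝ) : Prop :=
  ∀ n : ℕ, g n ∈ convexHull ℝ (f '' Set.Ici n)

end

/-!
Maximise the expected exponential utility `U f = E[1 - exp (-f)]` over `C`. Since `1 - exp (-x)`
is uniformly strictly concave on bounded intervals and `C` is bounded in probability, points of the
convex set `C` with nearly maximal utility are close in probability; hence a maximising sequence is
Cauchy in probability, a subsequence converges almost surely, and its limit `g` lies in `C` by
closedness and maximises `U`. As `U` is strictly increasing, `g` is maximal in `C`, and the
first-order condition at `g` reads `E[f exp (-g)] ≤ E[g exp (-g)]` for every `f ∈ C`: the finite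
measure `exp (-g) dP` exposes `g` as an outer support point.
-/

open Real
open scoped ENNReal Topology

noncomputable def expUtility (x : ℝ) : ℝ := 1 - exp (-x)

lemma expUtility_le_one (x : ℝ) : expUtility x ≤ 1 := by
  simp only [expUtility]; linarith [exp_pos (-x)]

lemma expUtility_nonneg {x : ℝ} (hx : 0 ≤ x) : 0 ≤ expUtility x :=
  sub_nonneg.2 (exp_le_one_iff.2 (neg_nonpos.2 hx))

lemma expUtility_strictMono : StrictMono expUtility := fun _ _ h => by
  simp only [expUtility]; linarith [exp_lt_exp.2 (neg_lt_neg h)]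

lemma abs_expUtility_le_one {x : ℝ} (hx : 0 ≤ x) : |expUtility x| ≤ 1 :=
  abs_le.2 ⟨by linarith [expUtility_nonneg hx], expUtility_le_one x⟩

lemma continuous_expUtility : Continuous expUtility := by
  unfold expUtility; fun_prop

lemma expUtility_midpoint_sub (x y : ℝ) :
    expUtility ((x + y) / 2) - (expUtility x + expUtility y) / 2
      = (exp (-(x / 2)) - exp (-(y / 2))) ^ 2 / 2 := by
  have hx : exp (-x) = exp (-(x / 2)) ^ 2 := by rw [sq, ← exp_add]; ring_nf
  have hy : exp (-y) = exp (-(y / 2)) ^ 2 := by rw [sq, ← exp_add]; ring_nf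
  have hxy : exp (-((x + y) / 2)) = exp (-(x / 2)) * exp (-(y / 2)) := by
    rw [← exp_add]; ring_nf
  simp only [expUtility]
  rw [hx, hy, hxy]; ring

lemma exp_neg_mul_sq_le_sq_sub_exp {x y ℓ ε : ℝ} (hxℓ : min x y ≤ ℓ) (hε : 0 ≤ ε)
    (hxy : ε ≤ |x - y|) :
    exp (-ℓ) * (1 - exp (-(ε / 2))) ^ 2 ≤ (exp (-(x / 2)) - exp (-(y / 2))) ^ 2 := by
  have hordered : ∀ a b : ℝ, a ≤ ℓ → a + ε ≤ b →
      exp (-ℓ) * (1 - exp (-(ε / 2))) ^ 2 ≤ (exp (-(a / 2)) - exp (-(b / 2))) ^ 2 := by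
    intro a b haℓ hab
    have hfac : exp (-(a / 2)) - exp (-(b / 2)) = exp (-(a / 2)) * (1 - exp (-((b - a) / 2))) := by
      rw [mul_sub, mul_one, ← exp_add]; ring_nf
    have hℓ : exp (-ℓ) = exp (-(ℓ / 2)) ^ 2 := by rw [sq, ← exp_add]; ring_nf
    have hε1 : exp (-(ε / 2)) ≤ 1 := exp_le_one_iff.2 (by linarith)
    rw [hfac, hℓ, ← mul_pow]
    refine pow_le_pow_left₀ (mul_nonneg (exp_pos _).le (by linarith)) ?_ 2
    exact mul_le_mul (exp_le_exp.2 (by linarith)) (by gcongr; linarith) (by linarith)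
      (exp_pos _).le
  rcases le_total x y with h | h
  · rw [abs_sub_comm, abs_of_nonneg (sub_nonneg.2 h)] at hxy
    exact hordered x y (by simpa [h] using hxℓ) (by linarith)
  · rw [abs_of_nonneg (sub_nonneg.2 h)] at hxy
    exact (hordered y x (by simpa [h] using hxℓ) (by linarith)).trans_eq (sub_sq_comm _ _)

lemma expUtility_slope_antitone (b d : ℝ) {t₁ t₂ : ℝ} (ht₁ : 0 < t₁) (ht : t₁ ≤ t₂) :
    (expUtility (b + t₂ * d) - expUtility b) / t₂
      ≤ (expUtility (b + t₁ * d) - expUtility b) / t₁ := by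
  have hconv : ConvexOn ℝ univ (exp ∘ AffineMap.lineMap (-b) (-b - d)) :=
    convexOn_exp.comp_affineMap _
  have h := hconv.secant_mono (a := 0) (mem_univ _) (mem_univ t₁) (mem_univ t₂) ht₁.ne'
    (by linarith) ht
  have hline : ∀ t : ℝ, t * (-b - d - -b) + -b = -(b + t * d) := fun t => by ring
  simp only [Function.comp_apply, AffineMap.lineMap_apply_ring', sub_zero, zero_mul, zero_add,
    hline] at h
  simp only [expUtility, sub_sub_sub_cancel_left]
  rw [← neg_sub (exp _), ← neg_sub (exp (-(b + t₁ * d))), neg_div, neg_div]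
  exact neg_le_neg h

lemma tendsto_expUtility_slope (b d : ℝ) :
    Tendsto (fun t => (expUtility (b + t * d) - expUtility b) / t) (𝓝[≠] 0)
      (𝓝 (exp (-b) * d)) := by
  have hderiv : HasDerivAt (fun t => expUtility (b + t * d)) (exp (-b) * d) 0 := by
    have := (((hasDerivAt_id (0 : ℝ)).mul_const d).const_add b).neg.exp.const_sub 1
    simpa [expUtility] using this
  refine (hasDerivAt_iff_tendsto_slope_zero.1 hderiv).congr fun t => ?_
  simp [div_eq_inv_mul]

lemma monotone_expUtility_slope_half_pow (b d : ℝ) :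
    Monotone fun n : ℕ => (expUtility (b + (1 / 2 : ℝ) ^ n * d) - expUtility b) / (1 / 2) ^ n :=
  monotone_nat_of_le_succ fun n => expUtility_slope_antitone b d (by positivity)
    (pow_le_pow_of_le_one (by norm_num) (by norm_num) n.le_succ)

lemma tendsto_expUtility_slope_half_pow (b d : ℝ) :
    Tendsto (fun n : ℕ => (expUtility (b + (1 / 2 : ℝ) ^ n * d) - expUtility b) / (1 / 2) ^ n)
      atTop (𝓝 (exp (-b) * d)) :=
  (tendsto_expUtility_slope b d).comp (tendsto_nhdsWithin_iff.2
    ⟨tendsto_pow_atTop_nhds_zero_of_lt_one (by norm_num) (by norm_num),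
      Eventually.of_forall fun n => (pow_pos (by norm_num) n).ne'⟩)

lemma mul_exp_neg_le_one (x : ℝ) : x * exp (-x) ≤ 1 := by
  rw [exp_neg, ← div_eq_mul_inv, div_le_one (exp_pos x)]
  linarith [add_one_le_exp x]

lemma ofReal_mul_exp_neg_add_one {x y : ℝ} (hx : 0 ≤ x) (hy : 0 ≤ y) :
    ENNReal.ofReal (y * exp (-x)) + 1
      = ENNReal.ofReal (exp (-x) * (y - x) + 1) + ENNReal.ofReal (x * exp (-x)) := by
  have hxe := mul_exp_neg_le_one x
  have he := (exp_pos (-x)).le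
  rw [← ENNReal.ofReal_one, ← ENNReal.ofReal_add (mul_nonneg hy he) zero_le_one,
    ← ENNReal.ofReal_add (by nlinarith) (mul_nonneg hx he)]
  ring_nf

namespace MeasureTheory.AEEqFun

variable {Ω : Type*} [MeasurableSpace Ω] {P : Measure Ω}

lemma coeFn_smul_add_smul (a b : ℝ) (f g : Ω →ₘ[P] ℝ) :
    ⇑(a • f + b • g) =ᵐ[P] fun ω => a * f ω + b * g ω := by
  filter_upwards [coeFn_add (a • f) (b • g), coeFn_smul a f, coeFn_smul b g] with ω h hf hg
  rw [h, Pi.add_apply, hf, hg]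
  rfl

end MeasureTheory.AEEqFun

section L0

variable {Ω : Type*} [MeasurableSpace Ω] {P : Measure Ω}

lemma ae_nonneg_of_mem_L0plus {f : Ω →ₘ[P] ℝ} (hf : f ∈ L0plus P) : ∀ᵐ ω ∂P, 0 ≤ f ω := by
  filter_upwards [AEEqFun.coeFn_le.2 hf, AEEqFun.coeFn_zero (β := ℝ) (μ := P)] with ω h h0
  rwa [h0] at h

lemma smul_add_smul_mem_L0plus {a b : ℝ} (ha : 0 ≤ a) (hb : 0 ≤ b) {f g : Ω →ₘ[P] ℝ}
    (hf : f ∈ L0plus P) (hg : g ∈ L0plus P) : a • f + b • g ∈ L0plus P := by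
  refine AEEqFun.coeFn_le.1 ?_
  filter_upwards [AEEqFun.coeFn_smul_add_smul a b f g, AEEqFun.coeFn_zero (β := ℝ) (μ := P),
    ae_nonneg_of_mem_L0plus hf, ae_nonneg_of_mem_L0plus hg] with ω h h0 hf0 hg0
  rw [h, h0]
  exact add_nonneg (mul_nonneg ha hf0) (mul_nonneg hb hg0)

lemma dist0_comm (f g : Ω →ₘ[P] ℝ) : dist0 P f g = dist0 P g f := by
  simp only [dist0, abs_sub_comm]

lemma IsClosed0.mem_of_tendsto0 {C : Set (Ω →ₘ[P] ℝ)} (hC : IsClosed0 P C)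
    {h : ℕ → Ω →ₘ[P] ℝ} (hh : ∀ k, h k ∈ C) {g : Ω →ₘ[P] ℝ} (hg : Tendsto0 P h g) : g ∈ C :=
  hC fun _ hε =>
    let ⟨k, hk⟩ := (hg.eventually_lt_const hε).exists
    ⟨h k, hh k, by rwa [dist0_comm]⟩

variable [IsFiniteMeasure P]

lemma integrable_min_one_abs_sub (f g : Ω →ₘ[P] ℝ) :
    Integrable (fun ω => min 1 |f ω - g ω|) P :=
  Integrable.of_bound
    ((continuous_const.min continuous_abs).measurable.comp
      (f.measurable.sub g.measurable)).aestronglyMeasurable 1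
    (ae_of_all _ fun ω => by
      rw [Real.norm_of_nonneg (le_min zero_le_one (abs_nonneg _))]
      exact min_le_left _ _)

lemma mul_measureReal_le_dist0 (f g : Ω →ₘ[P] ℝ) {r : ℝ} (hr : r ≤ 1) :
    r * P.real {ω | r ≤ |f ω - g ω|} ≤ dist0 P f g := by
  have hset : {ω | r ≤ min 1 |f ω - g ω|} = {ω | r ≤ |f ω - g ω|} := by
    ext ω; simp [hr]
  rw [← hset]
  exact mul_meas_ge_le_integral_of_nonneg
    (ae_of_all _ fun ω => le_min zero_le_one (abs_nonneg _)) (integrable_min_one_abs_sub f g) r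

lemma exists_ae_tendsto_of_dist0_lt {h : ℕ → Ω →ₘ[P] ℝ}
    (hh : ∀ k, dist0 P (h k) (h (k + 1)) < (1 / 4 : ℝ) ^ k) :
    ∃ g : Ω →ₘ[P] ℝ, ∀ᵐ ω ∂P, Tendsto (fun k => h k ω) atTop (𝓝 (g ω)) := by
  set A : ℕ → Set Ω := fun k => {ω | (1 / 2 : ℝ) ^ k ≤ |h k ω - h (k + 1) ω|}
  have hA : ∀ k, P.real (A k) ≤ (1 / 2 : ℝ) ^ k := fun k => by
    have hk := (mul_measureReal_le_dist0 (h k) (h (k + 1))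
      (pow_le_one₀ (n := k) (by norm_num : (0 : ℝ) ≤ 1 / 2) (by norm_num))).trans (hh k).le
    rw [show (1 / 4 : ℝ) ^ k = (1 / 2) ^ k * (1 / 2) ^ k by rw [← mul_pow]; norm_num] at hk
    exact le_of_mul_le_mul_left hk (by positivity)
  have hsum : ∑' k, P (A k) ≠ ∞ := by
    refine ne_top_of_le_ne_top (ENNReal.ofReal_ne_top (r := ∑' k : ℕ, (1 / 2 : ℝ) ^ k)) ?_
    rw [ENNReal.ofReal_tsum_of_nonneg (fun k => by positivity) summable_geometric_two]
    exact ENNReal.tsum_le_tsum fun k => by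
      rw [← ofReal_measureReal]; exact ENNReal.ofReal_le_ofReal (hA k)
  -- Borel–Cantelli: a.s. the increments are eventually dominated by a geometric series
  have hcauchy : ∀ᵐ ω ∂P, CauchySeq fun k => h k ω := by
    filter_upwards [ae_eventually_notMem hsum] with ω hω
    refine cauchySeq_of_summable_dist
      (summable_geometric_two.of_norm_bounded_eventually_nat ?_)
    filter_upwards [hω] with k hk
    have hk' : |h k ω - h (k + 1) ω| < (1 / 2) ^ k := not_le.1 hk
    simpa [Real.dist_eq] using hk'.le
  have hlim : ∀ᵐ ω ∂P, Tendsto (fun k => h k ω) atTop (𝓝 (limUnder atTop fun k => h k ω)) :=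
    hcauchy.mono fun _ hω => hω.tendsto_limUnder
  have hmeas := aemeasurable_of_tendsto_metrizable_ae atTop (fun k => (h k).measurable.aemeasurable)
    hlim
  refine ⟨AEEqFun.mk _ hmeas.aestronglyMeasurable, ?_⟩
  filter_upwards [hlim, AEEqFun.coeFn_mk _ hmeas.aestronglyMeasurable] with ω hω hmk
  rwa [hmk]

lemma tendsto0_of_ae_tendsto {h : ℕ → Ω →ₘ[P] ℝ} {g : Ω →ₘ[P] ℝ}
    (hg : ∀ᵐ ω ∂P, Tendsto (fun k => h k ω) atTop (𝓝 (g ω))) : Tendsto0 P h g := by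
  have := tendsto_integral_of_dominated_convergence (fun _ => (1 : ℝ))
    (fun k => (integrable_min_one_abs_sub (h k) g).aestronglyMeasurable) (integrable_const 1)
    (fun k => ae_of_all _ fun ω => by
      rw [Real.norm_of_nonneg (le_min zero_le_one (abs_nonneg _))]
      exact min_le_left _ _)
    (hg.mono fun ω hω => tendsto_const_nhds.min (hω.sub tendsto_const_nhds).abs)
  simpa [Tendsto0, dist0] using this

end L0

section ExpectedUtility

variable {Ω : Type*} [MeasurableSpace Ω] {P : Measure Ω}

noncomputable def expectedUtility (P : Measure Ω) (f : Ω →ₘ[P] ℝ) : ℝ :=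
  ∫ ω, expUtility (f ω) ∂P

variable [IsFiniteMeasure P]

lemma integrable_expUtility {f : Ω →ₘ[P] ℝ} (hf : f ∈ L0plus P) :
    Integrable (fun ω => expUtility (f ω)) P :=
  Integrable.of_bound (continuous_expUtility.comp_aestronglyMeasurable f.aestronglyMeasurable) 1
    ((ae_nonneg_of_mem_L0plus hf).mono fun _ h => abs_expUtility_le_one h)

lemma expectedUtility_mono {f g : Ω →ₘ[P] ℝ} (hf : f ∈ L0plus P) (hg : g ∈ L0plus P)
    (hfg : f ≤ g) : expectedUtility P f ≤ expectedUtility P g :=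
  integral_mono_ae (integrable_expUtility hf) (integrable_expUtility hg)
    ((AEEqFun.coeFn_le.2 hfg).mono fun _ h => expUtility_strictMono.monotone h)

lemma eq_of_le_of_expectedUtility_le {f g : Ω →ₘ[P] ℝ} (hf : f ∈ L0plus P) (hg : g ∈ L0plus P)
    (hfg : f ≤ g) (hU : expectedUtility P g ≤ expectedUtility P f) : f = g := by
  have hnn : 0 ≤ᵐ[P] fun ω => expUtility (g ω) - expUtility (f ω) :=
    (AEEqFun.coeFn_le.2 hfg).mono fun _ h => sub_nonneg.2 (expUtility_strictMono.monotone h)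
  have hzero : ∫ ω, expUtility (g ω) - expUtility (f ω) ∂P = 0 := by
    rw [integral_sub (integrable_expUtility hg) (integrable_expUtility hf)]
    exact le_antisymm (sub_nonpos.2 hU) (sub_nonneg.2 (expectedUtility_mono hf hg hfg))
  refine AEEqFun.ext ?_
  filter_upwards [(integral_eq_zero_iff_of_nonneg_ae hnn
    ((integrable_expUtility hg).sub (integrable_expUtility hf))).1 hzero] with ω hω
  exact expUtility_strictMono.injective (sub_eq_zero.1 hω).symm

lemma mem_maxSet_of_isMaxOn {C : Set (Ω →ₘ[P] ℝ)} (hCL0 : C ⊆ L0plus P) {g : Ω →ₘ[P] ℝ}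
    (hgC : g ∈ C) (hmax : IsMaxOn (expectedUtility P) C g) : g ∈ maxSet P C :=
  ⟨hgC, fun f hf hgf => eq_of_le_of_expectedUtility_le (hCL0 hgC) (hCL0 hf) hgf
    (isMaxOn_iff.1 hmax f hf)⟩

lemma tendsto_expectedUtility_of_ae_tendsto {h : ℕ → Ω →ₘ[P] ℝ} {g : Ω →ₘ[P] ℝ}
    (hh : ∀ k, h k ∈ L0plus P) (hg : ∀ᵐ ω ∂P, Tendsto (fun k => h k ω) atTop (𝓝 (g ω))) :
    Tendsto (fun k => expectedUtility P (h k)) atTop (𝓝 (expectedUtility P g)) :=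
  tendsto_integral_of_dominated_convergence (fun _ => 1)
    (fun k => (integrable_expUtility (hh k)).aestronglyMeasurable) (integrable_const 1)
    (fun k => (ae_nonneg_of_mem_L0plus (hh k)).mono fun _ h => abs_expUtility_le_one h)
    (hg.mono fun _ hω => (continuous_expUtility.tendsto _).comp hω)

/-- Quantitative strict concavity of `expectedUtility`: by `expUtility_midpoint_sub`, the
midpoint gap is `E[(exp (-f/2) - exp (-g/2))^2 / 2]`. -/
lemma mul_measureReal_le_expectedUtility_midpoint_sub {f g : Ω →ₘ[P] ℝ} (hf : f ∈ L0plus P)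
    (hg : g ∈ L0plus P) (ℓ : ℝ) {r : ℝ} (hr : 0 ≤ r) :
    exp (-ℓ) * (1 - exp (-(r / 2))) ^ 2 / 2 * P.real ({ω | r ≤ |f ω - g ω|} ∩ {ω | f ω ≤ ℓ})
      ≤ expectedUtility P ((1 / 2 : ℝ) • f + (1 / 2 : ℝ) • g)
        - (expectedUtility P f + expectedUtility P g) / 2 := by
  set q : Ω → ℝ := fun ω => (exp (-(f ω / 2)) - exp (-(g ω / 2))) ^ 2 / 2
  have hm := smul_add_smul_mem_L0plus (by norm_num : (0 : ℝ) ≤ 1 / 2)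
    (by norm_num : (0 : ℝ) ≤ 1 / 2) hf hg
  have hq : (fun ω => expUtility (((1 / 2 : ℝ) • f + (1 / 2 : ℝ) • g) ω)
      - (expUtility (f ω) + expUtility (g ω)) / 2) =ᵐ[P] q := by
    filter_upwards [AEEqFun.coeFn_smul_add_smul (1 / 2) (1 / 2) f g] with ω h
    rw [h, show 1 / 2 * f ω + 1 / 2 * g ω = (f ω + g ω) / 2 by ring]
    exact expUtility_midpoint_sub _ _
  have havg : Integrable (fun ω => (expUtility (f ω) + expUtility (g ω)) / 2) P :=
    ((integrable_expUtility hf).add (integrable_expUtility hg)).div_const 2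
  have hint : Integrable (fun ω => expUtility (((1 / 2 : ℝ) • f + (1 / 2 : ℝ) • g) ω)
      - (expUtility (f ω) + expUtility (g ω)) / 2) P := (integrable_expUtility hm).sub havg
  have heq : ∫ ω, q ω ∂P = expectedUtility P ((1 / 2 : ℝ) • f + (1 / 2 : ℝ) • g)
      - (expectedUtility P f + expectedUtility P g) / 2 := by
    rw [← integral_congr_ae hq, integral_sub (integrable_expUtility hm) havg, integral_div,
      integral_add (integrable_expUtility hf) (integrable_expUtility hg)]
    rfl
  rw [← heq]
  set c := exp (-ℓ) * (1 - exp (-(r / 2))) ^ 2 / 2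
  calc c * P.real ({ω | r ≤ |f ω - g ω|} ∩ {ω | f ω ≤ ℓ}) ≤ c * P.real {ω | c ≤ q ω} := by
        refine mul_le_mul_of_nonneg_left (measureReal_mono ?_) (by positivity)
        rintro ω ⟨hfg, hfℓ⟩
        exact div_le_div_of_nonneg_right
          (exp_neg_mul_sq_le_sq_sub_exp ((min_le_left _ _).trans hfℓ) hr hfg) zero_le_two
    _ ≤ ∫ ω, q ω ∂P :=
        mul_meas_ge_le_integral_of_nonneg (ae_of_all _ fun ω => by positivity)
          (hint.congr hq) c

end ExpectedUtility

section Maximizer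

variable {Ω : Type*} [MeasurableSpace Ω] {P : Measure Ω} [IsProbabilityMeasure P]
  {C : Set (Ω →ₘ[P] ℝ)}

lemma dist0_le_add_measureReal (f g : Ω →ₘ[P] ℝ) {r : ℝ} (hr : 0 ≤ r) :
    dist0 P f g ≤ r + P.real {ω | r ≤ |f ω - g ω|} := by
  set S := {ω | r ≤ |f ω - g ω|}
  have hS : MeasurableSet S :=
    measurableSet_le measurable_const (f.measurable.sub g.measurable).abs
  have hpt : ∀ ω, min 1 |f ω - g ω| ≤ r + S.indicator (fun _ => 1) ω := fun ω => by
    by_cases hω : ω ∈ S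
    · rw [indicator_of_mem hω]; linarith [min_le_left 1 |f ω - g ω|]
    · rw [indicator_of_notMem hω, add_zero]
      exact (min_le_right _ _).trans (not_le.1 hω).le
  calc dist0 P f g ≤ ∫ ω, r + S.indicator (fun _ => 1) ω ∂P :=
        integral_mono (integrable_min_one_abs_sub f g)
          ((integrable_const r).add ((integrable_const 1).indicator hS)) hpt
    _ = r + P.real S := by
        rw [integral_add (integrable_const r) ((integrable_const 1).indicator hS),
          integral_indicator_const _ hS]
        simp

lemma expectedUtility_le_one {f : Ω →ₘ[P] ℝ} (hf : f ∈ L0plus P) :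
    expectedUtility P f ≤ 1 := by
  simpa [expectedUtility] using integral_mono (integrable_expUtility hf) (integrable_const 1)
    fun ω => expUtility_le_one (f ω)

lemma exists_forall_dist0_lt_of_expectedUtility_ge (hCL0 : C ⊆ L0plus P) (hconv : Convex ℝ C)
    (hbdd : Bounded0 P C) {s : ℝ} (hs : ∀ f ∈ C, expectedUtility P f ≤ s) {ε : ℝ} (hε : 0 < ε) :
    ∃ δ > 0, ∀ f ∈ C, ∀ g ∈ C, s - δ ≤ expectedUtility P f → s - δ ≤ expectedUtility P g →
      dist0 P f g < ε := by
  obtain ⟨ℓ, hℓ⟩ : ∃ ℓ : ℝ, (⨆ f ∈ C, P {ω | ℓ < f ω}) < ENNReal.ofReal (ε / 4) :=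
    (hbdd.eventually_lt_const (ENNReal.ofReal_pos.2 (by positivity))).exists
  set c := exp (-ℓ) * (1 - exp (-(ε / 4 / 2))) ^ 2 / 2 with hc_def
  have hc : 0 < c := by
    have : 0 < 1 - exp (-(ε / 4 / 2)) := sub_pos.2 (exp_lt_one_iff.2 (by linarith))
    positivity
  refine ⟨c * (ε / 4), by positivity, fun f hf g hg hUf hUg => ?_⟩
  -- `{ε/4 ≤ |f - g|}` is covered by a part where `f ≤ ℓ`, small by concavity, and `{ℓ < f}`.
  have hnear : P.real ({ω | ε / 4 ≤ |f ω - g ω|} ∩ {ω | f ω ≤ ℓ}) ≤ ε / 4 := by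
    have hmid := hs _ (hconv hf hg (by norm_num : (0 : ℝ) ≤ 1 / 2) (by norm_num : (0 : ℝ) ≤ 1 / 2)
      (by norm_num))
    have := mul_measureReal_le_expectedUtility_midpoint_sub (hCL0 hf) (hCL0 hg) ℓ
      (by positivity : 0 ≤ ε / 4)
    rw [← hc_def] at this
    exact le_of_mul_le_mul_left (by linarith) hc
  have hlarge : P.real {ω | ℓ < f ω} ≤ ε / 4 :=
    (ENNReal.toReal_lt_of_lt_ofReal
      ((le_biSup (fun f : Ω →ₘ[P] ℝ => P {ω | ℓ < f ω}) hf).trans_lt hℓ)).le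
  have hsplit : P.real {ω | ε / 4 ≤ |f ω - g ω|}
      ≤ P.real ({ω | ε / 4 ≤ |f ω - g ω|} ∩ {ω | f ω ≤ ℓ}) + P.real {ω | ℓ < f ω} := by
    refine (measureReal_mono fun ω hω => ?_).trans (measureReal_union_le _ _)
    by_cases h : f ω ≤ ℓ
    exacts [Or.inl ⟨hω, h⟩, Or.inr (not_le.1 h)]
  linarith [dist0_le_add_measureReal f g (by positivity : 0 ≤ ε / 4)]

lemma exists_isMaxOn_expectedUtility (hCL0 : C ⊆ L0plus P) (hCne : C.Nonempty)
    (hconv : Convex ℝ C) (hcl : IsClosed0 P C) (hbdd : Bounded0 P C) :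
    ∃ g ∈ C, IsMaxOn (expectedUtility P) C g := by
  have hbddA : BddAbove (expectedUtility P '' C) :=
    ⟨1, forall_mem_image.2 fun f hf => expectedUtility_le_one (hCL0 hf)⟩
  set s := sSup (expectedUtility P '' C)
  have hs : ∀ f ∈ C, expectedUtility P f ≤ s := fun f hf => le_csSup hbddA (mem_image_of_mem _ hf)
  obtain ⟨v, -, hv, hvC⟩ := exists_seq_tendsto_sSup (hCne.image _) hbddA
  choose h hhC hhv using hvC
  have hcauchy : ∀ k : ℕ, ∃ N, ∀ n ≥ N, ∀ m ≥ n, dist0 P (h n) (h m) < (1 / 4 : ℝ) ^ k := by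
    intro k
    obtain ⟨δ, hδ, hclose⟩ := exists_forall_dist0_lt_of_expectedUtility_ge hCL0 hconv hbdd hs
      (by positivity : (0 : ℝ) < (1 / 4) ^ k)
    obtain ⟨N, hN⟩ :=
      eventually_atTop.1 (hv.eventually (eventually_ge_nhds (by linarith : s - δ < s)))
    refine ⟨N, fun n hn m hm => hclose _ (hhC n) _ (hhC m) ?_ ?_⟩
    · rw [hhv]; exact hN n hn
    · rw [hhv]; exact hN m (hn.trans hm)
  obtain ⟨φ, hφ, hφd⟩ := extraction_forall_of_eventually' hcauchy
  obtain ⟨g, hg⟩ := exists_ae_tendsto_of_dist0_lt fun k => hφd k (φ (k + 1)) (hφ.monotone k.le_succ)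
  refine ⟨g, hcl.mem_of_tendsto0 (fun k => hhC _) (tendsto0_of_ae_tendsto hg), isMaxOn_iff.2
    fun f hf => (hs f hf).trans_eq (tendsto_nhds_unique (hv.comp hφ.tendsto_atTop) ?_)⟩
  simp only [Function.comp_def, ← hhv]
  exact tendsto_expectedUtility_of_ae_tendsto (fun k => hCL0 (hhC _)) hg

end Maximizer

section FirstOrderCondition

variable {Ω : Type*} [MeasurableSpace Ω] {P : Measure Ω} [IsProbabilityMeasure P]
  {C : Set (Ω →ₘ[P] ℝ)}

lemma integral_expUtility_slope_add_one_le (hCL0 : C ⊆ L0plus P) (hconv : Convex ℝ C)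
    {g : Ω →ₘ[P] ℝ} (hgC : g ∈ C) (hmax : IsMaxOn (expectedUtility P) C g)
    {f : Ω →ₘ[P] ℝ} (hfC : f ∈ C) {t : ℝ} (ht : 0 < t) (ht1 : t ≤ 1) :
    ∫ ω, (expUtility (((1 - t) • g + t • f) ω) - expUtility (g ω)) / t + 1 ∂P ≤ 1 := by
  have hcC : (1 - t) • g + t • f ∈ C := hconv hgC hfC (sub_nonneg.2 ht1) ht.le (sub_add_cancel 1 _)
  have hc := integrable_expUtility (hCL0 hcC)
  have hg := integrable_expUtility (hCL0 hgC)
  have hdiff : Integrable (fun ω => expUtility (((1 - t) • g + t • f) ω) - expUtility (g ω)) P :=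
    hc.sub hg
  rw [integral_add (hdiff.div_const _) (integrable_const 1), integral_div, integral_sub hc hg]
  rw [integral_const, probReal_univ, one_smul, add_le_iff_nonpos_left]
  exact div_nonpos_of_nonpos_of_nonneg (sub_nonpos.2 (isMaxOn_iff.1 hmax _ hcC)) ht.le

/-- The first-order condition at a maximiser: the difference quotients of `expUtility` along
`g + t (f - g)` increase as `t ↓ 0`, so monotone convergence applies. -/
lemma lintegral_exp_neg_mul_sub_add_one_le (hCL0 : C ⊆ L0plus P) (hconv : Convex ℝ C)
    {g : Ω →ₘ[P] ℝ} (hgC : g ∈ C) (hmax : IsMaxOn (expectedUtility P) C g)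
    {f : Ω →ₘ[P] ℝ} (hfC : f ∈ C) :
    ∫⁻ ω, ENNReal.ofReal (exp (-g ω) * (f ω - g ω) + 1) ∂P ≤ 1 := by
  set t : ℕ → ℝ := fun n => (1 / 2 : ℝ) ^ n
  have ht : ∀ n, 0 < t n := fun n => by positivity
  have ht_le_one : ∀ n, t n ≤ 1 := fun n => pow_le_one₀ (by norm_num) (by norm_num)
  set c : ℕ → Ω →ₘ[P] ℝ := fun n => (1 - t n) • g + t n • f
  have hcC : ∀ n, c n ∈ C := fun n =>
    hconv hgC hfC (sub_nonneg.2 (ht_le_one n)) (ht n).le (sub_add_cancel 1 _)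
  set F : ℕ → Ω → ℝ := fun n ω => (expUtility (c n ω) - expUtility (g ω)) / t n + 1
  have hF : ∀ᵐ ω ∂P, ∀ n,
      F n ω = (expUtility (g ω + t n * (f ω - g ω)) - expUtility (g ω)) / t n + 1 := by
    rw [ae_all_iff]
    intro n
    filter_upwards [AEEqFun.coeFn_smul_add_smul (1 - t n) (t n) g f] with ω h
    simp only [F, c, h]
    ring_nf
  have hF_mono : ∀ᵐ ω ∂P, Monotone fun n => F n ω := hF.mono fun ω h m n hmn => by
    simpa only [h, add_le_add_iff_right] using
      monotone_expUtility_slope_half_pow (g ω) (f ω - g ω) hmn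
  have hF_nonneg : ∀ᵐ ω ∂P, ∀ n, 0 ≤ F n ω := by
    filter_upwards [hF, hF_mono, ae_nonneg_of_mem_L0plus (hCL0 hfC)] with ω h hmono hf0
    refine fun n => le_trans ?_ (hmono n.zero_le)
    simp only [h, t, pow_zero, one_mul, add_sub_cancel, div_one]
    linarith [expUtility_nonneg hf0, expUtility_le_one (g ω)]
  have hF_lim : ∀ᵐ ω ∂P, Tendsto (fun n => F n ω) atTop
      (𝓝 (exp (-g ω) * (f ω - g ω) + 1)) := by
    filter_upwards [hF] with ω h
    simp only [h]
    exact (tendsto_expUtility_slope_half_pow (g ω) (f ω - g ω)).add_const 1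
  have hdiff : ∀ n, Integrable (fun ω => expUtility (c n ω) - expUtility (g ω)) P := fun n =>
    (integrable_expUtility (hCL0 (hcC n))).sub (integrable_expUtility (hCL0 hgC))
  have hF_int : ∀ n, Integrable (F n) P := fun n =>
    ((hdiff n).div_const _).add (integrable_const 1)
  have hF_le : ∀ n, ∫ ω, F n ω ∂P ≤ 1 := fun n =>
    integral_expUtility_slope_add_one_le hCL0 hconv hgC hmax hfC (ht n) (ht_le_one n)
  refine le_of_tendsto' (lintegral_tendsto_of_tendsto_of_monotone
    (fun n => (hF_int n).aemeasurable.ennreal_ofReal)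
    (hF_mono.mono fun ω h _ _ hmn => ENNReal.ofReal_le_ofReal (h hmn))
    (hF_lim.mono fun ω h => (ENNReal.continuous_ofReal.tendsto _).comp h)) fun n => ?_
  rw [← ofReal_integral_eq_lintegral_ofReal (hF_int n) (hF_nonneg.mono fun ω h => h n)]
  exact ENNReal.ofReal_le_one.2 (hF_le n)

lemma lintegral_mul_exp_neg_le_of_isMaxOn (hCL0 : C ⊆ L0plus P) (hconv : Convex ℝ C)
    {g : Ω →ₘ[P] ℝ} (hgC : g ∈ C) (hmax : IsMaxOn (expectedUtility P) C g)
    {f : Ω →ₘ[P] ℝ} (hfC : f ∈ C) :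
    ∫⁻ ω, ENNReal.ofReal (f ω * exp (-g ω)) ∂P ≤ ∫⁻ ω, ENNReal.ofReal (g ω * exp (-g ω)) ∂P := by
  refine (ENNReal.add_le_add_iff_right ENNReal.one_ne_top).1 ?_
  calc ∫⁻ ω, ENNReal.ofReal (f ω * exp (-g ω)) ∂P + 1
      = ∫⁻ ω, ENNReal.ofReal (f ω * exp (-g ω)) + 1 ∂P := by
        rw [lintegral_add_right _ measurable_const, lintegral_one, measure_univ]
    _ = ∫⁻ ω, ENNReal.ofReal (exp (-g ω) * (f ω - g ω) + 1)
          + ENNReal.ofReal (g ω * exp (-g ω)) ∂P := by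
        refine lintegral_congr_ae ?_
        filter_upwards [ae_nonneg_of_mem_L0plus (hCL0 hgC), ae_nonneg_of_mem_L0plus (hCL0 hfC)]
          with ω hg0 hf0
        exact ofReal_mul_exp_neg_add_one hg0 hf0
    _ = ∫⁻ ω, ENNReal.ofReal (exp (-g ω) * (f ω - g ω) + 1) ∂P
          + ∫⁻ ω, ENNReal.ofReal (g ω * exp (-g ω)) ∂P :=
        lintegral_add_right' _ (by fun_prop)
    _ ≤ 1 + ∫⁻ ω, ENNReal.ofReal (g ω * exp (-g ω)) ∂P := by
        gcongr
        exact lintegral_exp_neg_mul_sub_add_one_le hCL0 hconv hgC hmax hfC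
    _ = ∫⁻ ω, ENNReal.ofReal (g ω * exp (-g ω)) ∂P + 1 := add_comm _ _

end FirstOrderCondition

section Pairing

variable {Ω : Type*} [MeasurableSpace Ω] {P : Measure Ω}

lemma pairing_withDensity_exp_neg (g f : Ω →ₘ[P] ℝ) :
    pairing (P.withDensity fun ω => ENNReal.ofReal (exp (-g ω))) f
      = ∫⁻ ω, ENNReal.ofReal (f ω * exp (-g ω)) ∂P := by
  rw [pairing, lintegral_withDensity_eq_lintegral_mul₀ (by fun_prop) (by fun_prop)]
  refine lintegral_congr fun ω => ?_
  rw [Pi.mul_apply, ← ENNReal.ofReal_mul (exp_pos _).le, mul_comm]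

lemma lintegral_mul_exp_neg_pos {g : Ω →ₘ[P] ℝ} (hg : g ∈ L0plus P) (hg0 : g ≠ 0) :
    0 < ∫⁻ ω, ENNReal.ofReal (g ω * exp (-g ω)) ∂P := by
  refine pos_iff_ne_zero.2 fun h => hg0 (AEEqFun.ext ?_)
  rw [lintegral_eq_zero_iff' (by fun_prop)] at h
  filter_upwards [h, ae_nonneg_of_mem_L0plus hg, AEEqFun.coeFn_zero (β := ℝ) (μ := P)]
    with ω h0 hnn hz
  rw [hz]
  have : g ω * exp (-g ω) ≤ 0 := ENNReal.ofReal_eq_zero.1 h0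
  exact le_antisymm (nonpos_of_mul_nonpos_left this (exp_pos _)) hnn

lemma lintegral_mul_exp_neg_lt_top [IsFiniteMeasure P] (g : Ω → ℝ) :
    ∫⁻ ω, ENNReal.ofReal (g ω * exp (-g ω)) ∂P < ∞ :=
  (lintegral_mono fun ω => ENNReal.ofReal_le_one.2 (mul_exp_neg_le_one (g ω))).trans_lt
    (by simp)

end Pairing

/-- A nonempty convexly compact (convex, closed and bounded) set
`C ⊆ L⁰₊` has at least one outer support point. -/
theorem statement2 {Ω : Type*} [MeasurableSpace Ω] (P : Measure Ω) [IsProbabilityMeasure P]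
    (C : Set (Ω →ₘ[P] ℝ)) (hCL0 : C ⊆ L0plus P) (hCne : C.Nonempty)
    (hconv : Convex ℝ C) (hcl : IsClosed0 P C) (hbdd : Bounded0 P C) :
    (osp P C).Nonempty := by
  by_cases hC0 : C = {0}
  · subst hC0
    exact ⟨0, ⟨rfl, fun f hf _ => (mem_singleton_iff.1 hf).symm⟩, Or.inl rfl⟩
  obtain ⟨g, hgC, hmax⟩ := exists_isMaxOn_expectedUtility hCL0 hCne hconv hcl hbdd
  have hg0 : g ≠ 0 := by
    rintro rfl
    exact hC0 (eq_singleton_iff_unique_mem.2 ⟨hgC, fun f hf =>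
      (eq_of_le_of_expectedUtility_le (le_refl (0 : Ω →ₘ[P] ℝ)) (hCL0 hf) (hCL0 hf)
        (isMaxOn_iff.1 hmax f hf)).symm⟩)
  refine ⟨g, mem_maxSet_of_isMaxOn hCL0 hgC hmax,
    Or.inr ⟨P.withDensity fun ω => ENNReal.ofReal (exp (-g ω)),
      withDensity_absolutelyContinuous _ _, inferInstance, ?_, ?_, ?_⟩⟩
  · rw [pairing_withDensity_exp_neg]
    exact lintegral_mul_exp_neg_pos (hCL0 hgC) hg0
  · rw [pairing_withDensity_exp_neg]
    exact lintegral_mul_exp_neg_lt_top g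
  · refine le_antisymm (iSup₂_le fun f hf => ?_) (le_biSup _ hgC)
    simp only [pairing_withDensity_exp_neg]
    exact lintegral_mul_exp_neg_le_of_isMaxOn hCL0 hconv hgC hmax hf
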